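/- arXiv:1908.01829 — 6 statements merged into one kernel-verified Lean document; each statement's English description precedes it below -/
import Mathlib

section
/- Let 0 < λ, μ < 1, p, u, v ∈ ℝ, and let Q = Q₀ + (1/4)·[[p+λ+μ,0,0,u],[0,−p+λ−μ,v,0],[0,v,−p−λ+μ,0],[u,0,0,p−λ−μ]] where Q₀ = (1/4)·[[1,0,0,1],[0,1,1,0],[0,1,1,0],[1,0,0,1]]. Then Q is positive semidefinite if and only if −1 + √((λ+μ)² + (1+u)²) ≤ p ≤ 1 − √((λ−μ)² + (1+v)²). -/
/-!
In the basis order `(e₀, e₃, e₁, e₂)` the matrix `4 Q` is block diagonal, with blocks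
`[[1 + p + (λ + μ), 1 + u], [1 + u, 1 + p - (λ + μ)]]` and
`[[1 - p + (λ - μ), 1 + v], [1 + v, 1 - p - (λ - μ)]]`.
A symmetric `2 × 2` matrix `[[a + b, c], [c, a - b]]` is positive semidefinite iff its smaller
eigenvalue `a - √(b² + c²)` is nonnegative; the two blocks give the two bounds on `p`.
-/

def binaryForm (a b c x y : ℝ) : ℝ :=
  (a + b) * x ^ 2 + 2 * c * x * y + (a - b) * y ^ 2

lemma binaryForm_nonneg_iff (a b c : ℝ) :
    (∀ x y, 0 ≤ binaryForm a b c x y) ↔ √(b ^ 2 + c ^ 2) ≤ a := by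
  rw [Real.sqrt_le_iff]
  unfold binaryForm
  constructor
  · intro h
    have hplus := h 1 0
    have hminus := h 0 1
    have ha : 0 ≤ a := by linarith
    refine ⟨ha, ?_⟩
    -- evaluating at the two kernel directions of the adjugate gives `(a ± b)(a² - b² - c²) ≥ 0`
    have hdet_plus := h c (-(a + b))
    have hdet_minus := h (a - b) (-c)
    rcases ha.eq_or_lt with rfl | ha
    · have hc_nonneg := h 1 1
      have hc_nonpos := h 1 (-1)
      nlinarith
    · nlinarith
  · rintro ⟨ha, hdet⟩ x y
    -- `2a · form = ((a + b)x + cy)² + (cx + (a - b)y)² + (a² - b² - c²)(x² + y²)`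
    have hdisc : 0 ≤ a ^ 2 - b ^ 2 - c ^ 2 := by linarith
    rcases ha.eq_or_lt with rfl | ha
    · have hb : b = 0 := by nlinarith
      have hc : c = 0 := by nlinarith
      simp [hb, hc]
    · nlinarith [sq_nonneg ((a + b) * x + c * y), sq_nonneg (c * x + (a - b) * y),
        mul_nonneg hdisc (add_nonneg (sq_nonneg x) (sq_nonneg y))]

theorem Q_posSemidef_iff_general (lam mu p u v : ℝ) :
    let Q0 : Matrix (Fin 4) (Fin 4) ℝ :=
      (1 / 4 : ℝ) • !![1, 0, 0, 1; 0, 1, 1, 0; 0, 1, 1, 0; 1, 0, 0, 1]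
    let Q : Matrix (Fin 4) (Fin 4) ℝ := Q0 + (1 / 4 : ℝ) •
      !![p + lam + mu, 0, 0, u;
         0, -p + lam - mu, v, 0;
         0, v, -p - lam + mu, 0;
         u, 0, 0, p - lam - mu]
    (Q.PosSemidef ↔
      -1 + Real.sqrt ((lam + mu) ^ 2 + (1 + u) ^ 2) ≤ p ∧
        p ≤ 1 - Real.sqrt ((lam - mu) ^ 2 + (1 + v) ^ 2)) := by
  intro Q0 Q
  have hQ : Q.IsHermitian := by
    ext i j
    fin_cases i <;> fin_cases j <;> simp [Q, Q0]
  have hform : ∀ x : Fin 4 → ℝ, dotProduct (star x) (Q.mulVec x) =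
      (binaryForm (1 + p) (lam + mu) (1 + u) (x 0) (x 3) +
        binaryForm (1 - p) (lam - mu) (1 + v) (x 1) (x 2)) / 4 := by
    intro x
    simp only [Q, Q0, binaryForm, dotProduct, Matrix.mulVec, Fin.sum_univ_four, Pi.star_apply,
      star_trivial, Matrix.add_apply, Matrix.smul_apply, smul_eq_mul, Matrix.of_apply,
      Matrix.cons_val]
    ring
  rw [Matrix.posSemidef_iff_dotProduct_mulVec, neg_add_le_iff_le_add, le_sub_comm,
    ← binaryForm_nonneg_iff, ← binaryForm_nonneg_iff]
  constructor
  · rintro ⟨-, hQx⟩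
    refine ⟨fun x y => ?_, fun x y => ?_⟩
    · have h := hQx ![x, 0, 0, y]
      rw [hform] at h
      simpa [binaryForm, le_div_iff₀] using h
    · have h := hQx ![0, x, y, 0]
      rw [hform] at h
      simpa [binaryForm, le_div_iff₀] using h
  · rintro ⟨h₀₃, h₁₂⟩
    refine ⟨hQ, fun x => ?_⟩
    rw [hform]
    exact div_nonneg (add_nonneg (h₀₃ _ _) (h₁₂ _ _)) (by norm_num)

theorem Q_posSemidef_iff (lam mu p u v : ℝ) (hlam : 0 < lam) (hlam1 : lam < 1)
    (hmu : 0 < mu) (hmu1 : mu < 1) :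
    let Q0 : Matrix (Fin 4) (Fin 4) ℝ :=
      (1 / 4 : ℝ) • !![1, 0, 0, 1; 0, 1, 1, 0; 0, 1, 1, 0; 1, 0, 0, 1]
    let Q : Matrix (Fin 4) (Fin 4) ℝ := Q0 + (1 / 4 : ℝ) •
      !![p + lam + mu, 0, 0, u;
         0, -p + lam - mu, v, 0;
         0, v, -p - lam + mu, 0;
         u, 0, 0, p - lam - mu]
    (Q.PosSemidef ↔
      -1 + Real.sqrt ((lam + mu) ^ 2 + (1 + u) ^ 2) ≤ p ∧
        p ≤ 1 - Real.sqrt ((lam - mu) ^ 2 + (1 + v) ^ 2)) :=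
  Q_posSemidef_iff_general lam mu p u v
end

section
/- Let 0 ≤ λ, μ < 1. The function f(x) = x/2 + (1/4)(λ+μ)√(x² − 4γ²) + (1/4)(λ−μ)√(x² − 4δ²), with γ = −2ab(1−λμ)/√((1−λ²)(1−μ²)) and δ = −2ab(1+λμ)/√((1−λ²)(1−μ²)) and λ ≥ μ, a, b > 0, attains its maximum over x ≤ 2δ at x* = −4ab(1−λ²μ²)/((1−λ²)(1−μ²)), and f(x*) = −2ab. -/
set_option maxHeartbeats 1000000

lemma sqrt_prod_le (u v c : ℝ) (hu : 0 ≤ u) (hv : 0 ≤ v) (hc : 0 ≤ c)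
    (h1 : c ≤ u ^ 2) (h2 : c ≤ v ^ 2) :
    Real.sqrt (u ^ 2 - c) * Real.sqrt (v ^ 2 - c) ≤ u * v - c := by
  have huv : c ≤ u * v := by
    nlinarith [mul_nonneg hu hv, mul_le_mul h1 h2 hc (sq_nonneg u)]
  rw [← Real.sqrt_mul (by linarith)]
  calc Real.sqrt ((u ^ 2 - c) * (v ^ 2 - c)) ≤ Real.sqrt ((u * v - c) ^ 2) :=
        Real.sqrt_le_sqrt (by nlinarith [mul_nonneg hc (sq_nonneg (u - v))])
    _ = u * v - c := Real.sqrt_sq (by linarith)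

theorem dual_max (a b lam mu : ℝ) (ha : 0 < a) (hb : 0 < b)
    (hmu : 0 ≤ mu) (hml : mu ≤ lam) (hlam1 : lam < 1) :
    let γ := -2 * a * b * (1 - lam * mu) / Real.sqrt ((1 - lam ^ 2) * (1 - mu ^ 2))
    let δ := -2 * a * b * (1 + lam * mu) / Real.sqrt ((1 - lam ^ 2) * (1 - mu ^ 2))
    let f : ℝ → ℝ := fun x => x / 2 +
      (1 / 4) * (lam + mu) * Real.sqrt (x ^ 2 - 4 * γ ^ 2) +
      (1 / 4) * (lam - mu) * Real.sqrt (x ^ 2 - 4 * δ ^ 2)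
    let xstar := -4 * a * b * (1 - lam ^ 2 * mu ^ 2) / ((1 - lam ^ 2) * (1 - mu ^ 2))
    (∀ x ≤ 2 * δ, f x ≤ f xstar) ∧ f xstar = -2 * a * b := by
  intro γ δ f xstar
  have hlam : 0 ≤ lam := le_trans hmu hml
  have hmu1 : mu < 1 := lt_of_le_of_lt hml hlam1
  have hA : 0 < 1 - lam ^ 2 := by nlinarith
  have hB : 0 < 1 - mu ^ 2 := by nlinarith
  have hD : 0 < (1 - lam ^ 2) * (1 - mu ^ 2) := mul_pos hA hB
  have hs : 0 < Real.sqrt ((1 - lam ^ 2) * (1 - mu ^ 2)) := Real.sqrt_pos.mpr hD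
  have hs2 : Real.sqrt ((1 - lam ^ 2) * (1 - mu ^ 2)) ^ 2 = (1 - lam ^ 2) * (1 - mu ^ 2) :=
    Real.sq_sqrt hD.le
  have hlm : 0 < 1 - lam * mu := by nlinarith
  have hlm' : 0 < 1 + lam * mu := by nlinarith
  have hγ : γ = -2 * a * b * (1 - lam * mu) / Real.sqrt ((1 - lam ^ 2) * (1 - mu ^ 2)) := rfl
  have hδ : δ = -2 * a * b * (1 + lam * mu) / Real.sqrt ((1 - lam ^ 2) * (1 - mu ^ 2)) := rfl
  have hxs : xstar = -4 * a * b * (1 - lam ^ 2 * mu ^ 2) / ((1 - lam ^ 2) * (1 - mu ^ 2)) := rfl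
  have hf : ∀ x, f x = x / 2 +
      (1 / 4) * (lam + mu) * Real.sqrt (x ^ 2 - 4 * γ ^ 2) +
      (1 / 4) * (lam - mu) * Real.sqrt (x ^ 2 - 4 * δ ^ 2) := fun x => rfl
  clear_value γ δ f xstar
  have hγ2 : γ ^ 2 = 4 * a ^ 2 * b ^ 2 * (1 - lam * mu) ^ 2 / ((1 - lam ^ 2) * (1 - mu ^ 2)) := by
    rw [hγ, div_pow, hs2]; ring_nf
  have hδ2 : δ ^ 2 = 4 * a ^ 2 * b ^ 2 * (1 + lam * mu) ^ 2 / ((1 - lam ^ 2) * (1 - mu ^ 2)) := by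
    rw [hδ, div_pow, hs2]; ring_nf
  obtain ⟨Mγ, hMγ⟩ : ∃ m : ℝ, m = 4 * a * b * (1 - lam * mu) / ((1 - lam ^ 2) * (1 - mu ^ 2)) :=
    ⟨_, rfl⟩
  obtain ⟨Mδ, hMδ⟩ : ∃ m : ℝ, m = 4 * a * b * (1 + lam * mu) / ((1 - lam ^ 2) * (1 - mu ^ 2)) :=
    ⟨_, rfl⟩
  have hMγpos : 0 < Mγ := by rw [hMγ]; positivity
  have hMδpos : 0 < Mδ := by rw [hMδ]; positivity
  have hvγ : xstar ^ 2 - 4 * γ ^ 2 = ((lam + mu) * Mγ) ^ 2 := by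
    rw [hγ2, hxs, hMγ]; field_simp; ring
  have hvδ : xstar ^ 2 - 4 * δ ^ 2 = ((lam - mu) * Mδ) ^ 2 := by
    rw [hδ2, hxs, hMδ]; field_simp; ring
  have hKγ : 0 ≤ (lam + mu) * Mγ := mul_nonneg (by linarith) hMγpos.le
  have hKδ : 0 ≤ (lam - mu) * Mδ := mul_nonneg (by linarith) hMδpos.le
  have hsγ : Real.sqrt (xstar ^ 2 - 4 * γ ^ 2) = (lam + mu) * Mγ := by
    rw [hvγ, Real.sqrt_sq hKγ]
  have hsδ : Real.sqrt (xstar ^ 2 - 4 * δ ^ 2) = (lam - mu) * Mδ := by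
    rw [hvδ, Real.sqrt_sq hKδ]
  have hfxs : f xstar = -2 * a * b := by
    rw [hf]
    show xstar / 2 + (1 / 4) * (lam + mu) * Real.sqrt (xstar ^ 2 - 4 * γ ^ 2) +
      (1 / 4) * (lam - mu) * Real.sqrt (xstar ^ 2 - 4 * δ ^ 2) = -2 * a * b
    rw [hsγ, hsδ, hxs, hMγ, hMδ]
    field_simp
    ring
  refine ⟨?_, hfxs⟩
  intro x hx
  -- basic sign facts
  have hδneg : δ < 0 := by
    rw [hδ]
    apply div_neg_of_neg_of_pos _ hs
    linarith [mul_pos (mul_pos ha hb) hlm']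
  have hγδ : δ ≤ γ := by
    have : γ - δ = 4 * a * b * (lam * mu) / Real.sqrt ((1 - lam ^ 2) * (1 - mu ^ 2)) := by
      rw [hγ, hδ]; ring
    linarith [this, div_nonneg (by positivity : (0:ℝ) ≤ 4 * a * b * (lam * mu)) hs.le]
  have hγneg : γ < 0 := by
    rw [hγ]
    apply div_neg_of_neg_of_pos _ hs
    linarith [mul_pos (mul_pos ha hb) hlm]
  have hxneg : x < 0 := lt_of_le_of_lt hx (by linarith)
  have hxsneg : xstar < 0 := by
    rw [hxs]
    apply div_neg_of_neg_of_pos _ hD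
    linarith [mul_pos (mul_pos ha hb) (mul_pos hlm hlm')]
  have hx2δ : 4 * δ ^ 2 ≤ x ^ 2 := by
    have h := pow_le_pow_left₀ (show (0:ℝ) ≤ -(2 * δ) by linarith)
      (show -(2 * δ) ≤ -x by linarith) 2
    linarith [h]
  have hγ2δ2 : γ ^ 2 ≤ δ ^ 2 := by
    have h := pow_le_pow_left₀ (show (0:ℝ) ≤ -γ by linarith)
      (show -γ ≤ -δ by linarith) 2
    linarith [h]
  have hx2γ : 4 * γ ^ 2 ≤ x ^ 2 := by linarith
  have hxs2γ : 4 * γ ^ 2 ≤ xstar ^ 2 := by linarith [hvγ, sq_nonneg ((lam + mu) * Mγ)]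
  have hxs2δ : 4 * δ ^ 2 ≤ xstar ^ 2 := by linarith [hvδ, sq_nonneg ((lam - mu) * Mδ)]
  have hγ2nn : 0 ≤ 4 * γ ^ 2 := by positivity
  have hδ2nn : 0 ≤ 4 * δ ^ 2 := by positivity
  -- Cauchy–Schwarz tangent bounds
  have keyγ := sqrt_prod_le (-x) (-xstar) (4 * γ ^ 2) (by linarith) (by linarith) hγ2nn
    (by linarith [hx2γ, sq_abs x, sq_nonneg x, neg_pow x 2]) (by linarith [hxs2γ, neg_pow xstar 2])
  have keyδ := sqrt_prod_le (-x) (-xstar) (4 * δ ^ 2) (by linarith) (by linarith) hδ2nn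
    (by linarith [hx2δ, neg_pow x 2]) (by linarith [hxs2δ, neg_pow xstar 2])
  rw [show (-x) ^ 2 - 4 * γ ^ 2 = x ^ 2 - 4 * γ ^ 2 by ring,
    show (-xstar) ^ 2 - 4 * γ ^ 2 = xstar ^ 2 - 4 * γ ^ 2 by ring, hsγ] at keyγ
  rw [show (-x) ^ 2 - 4 * δ ^ 2 = x ^ 2 - 4 * δ ^ 2 by ring,
    show (-xstar) ^ 2 - 4 * δ ^ 2 = xstar ^ 2 - 4 * δ ^ 2 by ring, hsδ] at keyδ
  -- keyγ : √(x²-4γ²) * ((lam+mu) * Mγ) ≤ (-x)*(-xstar) - 4γ²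
  have bγ : (lam + mu) * Real.sqrt (x ^ 2 - 4 * γ ^ 2) ≤ (x * xstar - 4 * γ ^ 2) / Mγ := by
    rw [le_div_iff₀ hMγpos]
    linarith [keyγ]
  have bδ : (lam - mu) * Real.sqrt (x ^ 2 - 4 * δ ^ 2) ≤ (x * xstar - 4 * δ ^ 2) / Mδ := by
    rw [le_div_iff₀ hMδpos]
    linarith [keyδ]
  have key : x / 2 + (1 / 4) * ((x * xstar - 4 * γ ^ 2) / Mγ) +
      (1 / 4) * ((x * xstar - 4 * δ ^ 2) / Mδ) = -2 * a * b := by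
    rw [hγ2, hδ2, hxs, hMγ, hMδ]
    field_simp
    ring
  rw [hf, hfxs]
  linarith [bγ, bδ, key]
end

section
/- Let C be a 4×4 symmetric matrix of the form [[A,0,0,γ],[0,B,δ,0],[0,δ,C',0],[γ,0,0,D]] and let A' = diag(α₁, α₂), B' = diag(β₁, β₂) be 2×2 diagonal matrices. Set ā = α₁+β₁−A, b̄ = α₁+β₂−B, c̄ = α₂+β₁−C', d̄ = α₂+β₂−D. Then A'⊗I + I⊗B' ≤ C (as symmetric matrices on ℝ²⊗ℝ² ≅ ℝ⁴) if and only if ā + d̄ ≤ −√((ā−d̄)² + 4γ²) and b̄ + c̄ ≤ −√((b̄−c̄)² + 4δ²). -/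
/-!
In the basis ordered e₁⊗e₁, e₂⊗e₂, e₁⊗e₂, e₂⊗e₁ the matrix Cm − T is block diagonal, with blocks
[[−ā, γ], [γ, −d̄]] and [[−b̄, δ], [δ, −c̄]]. A real symmetric 2×2 matrix [[p, g], [g, q]] is positive
semidefinite iff p + q ≥ 0 and pq ≥ g², i.e. iff its smaller eigenvalue
(p + q − √((p − q)² + 4g²)) / 2 is nonnegative.
-/

theorem forall_quadratic_nonneg_iff (p q g : ℝ) :
    (∀ x y : ℝ, 0 ≤ p * x ^ 2 + 2 * g * x * y + q * y ^ 2) ↔ 0 ≤ p + q ∧ g ^ 2 ≤ p * q := by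
  constructor
  · intro h
    have hp : 0 ≤ p := by simpa using h 1 0
    have hq : 0 ≤ q := by simpa using h 0 1
    have hdiscrim : discrim p (2 * g) q ≤ 0 :=
      discrim_le_zero fun x => by have := h x 1; ring_nf at this ⊢; linarith
    refine ⟨add_nonneg hp hq, ?_⟩
    rw [discrim] at hdiscrim
    linarith
  · rintro ⟨hpq, hg⟩ x y
    have hsos : (p + q) * (p * x ^ 2 + 2 * g * x * y + q * y ^ 2) =
        (p * x + g * y) ^ 2 + (g * x + q * y) ^ 2 + (p * q - g ^ 2) * (x ^ 2 + y ^ 2) := by ring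
    rcases hpq.lt_or_eq with hpos | hzero
    · refine nonneg_of_mul_nonneg_right ?_ hpos
      rw [hsos]
      have := sub_nonneg.2 hg
      positivity
    · have hp : p = 0 := by nlinarith [sq_nonneg g, sq_nonneg p]
      have hq : q = 0 := by linarith
      have : g = 0 := by subst hp hq; simpa using hg
      simp [hp, hq, this]

theorem forall_quadratic_nonneg_iff_sqrt_le (p q g : ℝ) :
    (∀ x y : ℝ, 0 ≤ p * x ^ 2 + 2 * g * x * y + q * y ^ 2) ↔
      Real.sqrt ((p - q) ^ 2 + 4 * g ^ 2) ≤ p + q := by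
  rw [forall_quadratic_nonneg_iff, Real.sqrt_le_iff]
  constructor <;> rintro ⟨h₁, h₂⟩ <;> exact ⟨h₁, by linarith⟩

theorem forall_neg_quadratic_nonneg_iff (a d g : ℝ) :
    (∀ x y : ℝ, 0 ≤ -a * x ^ 2 + 2 * g * x * y + -d * y ^ 2) ↔
      a + d ≤ -Real.sqrt ((a - d) ^ 2 + 4 * g ^ 2) := by
  rw [forall_quadratic_nonneg_iff_sqrt_le, neg_sub_neg, ← neg_sq, neg_sub]
  constructor <;> intro h <;> linarith

theorem tensor_duality_constraint (A B C' D γ δ α₁ α₂ β₁ β₂ : ℝ) :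
    let Cm : Matrix (Fin 4) (Fin 4) ℝ :=
      !![A, 0, 0, γ; 0, B, δ, 0; 0, δ, C', 0; γ, 0, 0, D]
    -- A'⊗I + I⊗B' in the basis e₁⊗e₁, e₁⊗e₂, e₂⊗e₁, e₂⊗e₂,
    -- with A' = diag(α₁, α₂) and B' = diag(β₁, β₂):
    let T : Matrix (Fin 4) (Fin 4) ℝ :=
      Matrix.diagonal ![α₁ + β₁, α₁ + β₂, α₂ + β₁, α₂ + β₂]
    let abar := α₁ + β₁ - A
    let bbar := α₁ + β₂ - B
    let cbar := α₂ + β₁ - C'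
    let dbar := α₂ + β₂ - D
    ((Cm - T).PosSemidef ↔
      abar + dbar ≤ -Real.sqrt ((abar - dbar) ^ 2 + 4 * γ ^ 2) ∧
        bbar + cbar ≤ -Real.sqrt ((bbar - cbar) ^ 2 + 4 * δ ^ 2)) := by
  intro Cm T abar bbar cbar dbar
  have hform : ∀ x : Fin 4 → ℝ, star x ⬝ᵥ (Cm - T).mulVec x =
      (-abar * x 0 ^ 2 + 2 * γ * x 0 * x 3 + -dbar * x 3 ^ 2) +
        (-bbar * x 1 ^ 2 + 2 * δ * x 1 * x 2 + -cbar * x 2 ^ 2) := by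
    intro x
    simp [Cm, T, abar, bbar, cbar, dbar, dotProduct, Matrix.mulVec, Fin.sum_univ_four,
      Matrix.diagonal]
    ring
  have hherm : (Cm - T).IsHermitian := by
    refine Matrix.IsHermitian.sub ?_ (Matrix.isHermitian_diagonal _)
    ext i j
    fin_cases i <;> fin_cases j <;> simp [Cm]
  rw [Matrix.posSemidef_iff_dotProduct_mulVec, ← forall_neg_quadratic_nonneg_iff,
    ← forall_neg_quadratic_nonneg_iff]
  simp only [hherm, true_and, hform]
  constructor
  · intro h
    exact ⟨fun x y => by simpa using h ![x, 0, 0, y], fun x y => by simpa using h ![0, x, y, 0]⟩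
  · rintro ⟨h₁, h₂⟩ x
    exact add_nonneg (h₁ _ _) (h₂ _ _)
end

section
/- Let 0 < λ < 1, 0 < η < 1 and sufficiently small ε > 0, and Q_ε = Q_c + εQ_q as above. Then Q_ε is positive definite; in particular Q_ε is a symmetric matrix with trace 1 that is positive semidefinite with strictly positive determinant. -/
/-!
In the coordinates `p, q, r, z` of `productCoords` one has `8 xᵀQ_c x = p² + η q² + (1-η) r²` and
`4(1-λ²)² xᵀQ_q x = (z + q - λ(p+r))² - (1-λ²)(z - q)²`. So `Q_c` is positive semidefinite with
kernel `{p = q = r = 0}`, on which the form of `Q_q` is `λ² z² / (4(1-λ²)²) > 0`. In general the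
negative part of `Q_q` is at most a multiple of `p² + q² + r²`, hence of `xᵀQ_c x`; so for small `ε`
the form of `Q_c + ε Q_q` dominates a positive combination of `xᵀQ_c x` and `z²`, which vanishes
only at `x = 0`.
-/

open Matrix

theorem Matrix.PosSemidef.posDef_add_smul {n : Type*} [Fintype n] {A B : Matrix n n ℝ}
    (hA : A.PosSemidef) (hB : B.IsHermitian) {S : (n → ℝ) → ℝ} {δ ε : ℝ}
    (hS : ∀ x, 0 ≤ S x) (hAS : ∀ x ≠ 0, 0 < x ⬝ᵥ A *ᵥ x + S x)
    (hBS : ∀ x, S x - x ⬝ᵥ A *ᵥ x ≤ δ * (x ⬝ᵥ B *ᵥ x)) (hε : 0 < ε) (hεδ : ε < δ) :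
    (A + ε • B).PosDef := by
  refine .of_dotProduct_mulVec_pos (hA.isHermitian.add (hB.smul (.all ε))) fun x hx => ?_
  have hA₀ : 0 ≤ x ⬝ᵥ A *ᵥ x := by simpa using hA.dotProduct_mulVec_nonneg x
  have hpos : 0 < (δ - ε) * (x ⬝ᵥ A *ᵥ x) + ε * S x := by
    rcases hA₀.lt_or_eq with h | h
    · exact add_pos_of_pos_of_nonneg (mul_pos (sub_pos.2 hεδ) h) (mul_nonneg hε.le (hS x))
    · have := hAS x hx
      rw [← h] at this ⊢
      nlinarith
  -- `δ · xᵀ(A + εB)x ≥ δ · xᵀAx + ε (S x - xᵀAx)`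
  have key : 0 < δ * (x ⬝ᵥ (A + ε • B) *ᵥ x) := by
    simp only [add_mulVec, smul_mulVec, dotProduct_add, dotProduct_smul, smul_eq_mul]
    nlinarith [hBS x]
  simpa using pos_of_mul_pos_right key (hε.trans hεδ).le

theorem sq_sub_mul_sq_ge {l p q r z : ℝ} (hl : l ^ 2 ≤ 1) :
    l ^ 4 * z ^ 2 / 2 - 25 * (p ^ 2 + q ^ 2 + r ^ 2)
      ≤ l ^ 2 * ((z + q - l * (p + r)) ^ 2 - (1 - l ^ 2) * (z - q) ^ 2) := by
  set y := (2 - l ^ 2) * q - l * (p + r)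
  have hy : y ^ 2 ≤ 12 * q ^ 2 + 3 * p ^ 2 + 3 * r ^ 2 := by
    have hc : y ^ 2 ≤ 3 * (((2 - l ^ 2) * q) ^ 2 + (l * p) ^ 2 + (l * r) ^ 2) := by
      nlinarith [sq_nonneg ((2 - l ^ 2) * q + l * p), sq_nonneg ((2 - l ^ 2) * q + l * r),
        sq_nonneg (l * p - l * r)]
    nlinarith [sq_nonneg l, mul_nonneg (sub_nonneg.2 hl) (sq_nonneg p),
      mul_nonneg (sub_nonneg.2 hl) (sq_nonneg r),
      mul_nonneg (mul_nonneg (sub_nonneg.2 hl) (sq_nonneg l)) (sq_nonneg q)]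
  have hq : l ^ 2 * (1 - l ^ 2) * q ^ 2 ≤ q ^ 2 := by
    nlinarith [mul_nonneg (sq_nonneg (l ^ 2 - 1 / 2)) (sq_nonneg q)]
  -- `l² · (…) = l⁴z²/2 + (l²z + 2y)²/2 - 2y² + l²(q - l(p+r))² - l²(1-l²)q²`
  nlinarith [sq_nonneg (l ^ 2 * z + 2 * y), sq_nonneg (l * (q - l * (p + r))), sq_nonneg p,
    sq_nonneg r]

noncomputable def classicalCoupling (lam eta : ℝ) : Matrix (Fin 4) (Fin 4) ℝ :=
  !![(1 + lam) ^ 2 / 4, 0,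
       eta * Real.sqrt (1 - lam) * (1 + lam) * Real.sqrt (1 + lam) / 4,
       (eta - 1) * (lam ^ 2 - 1) / 4;
     0, (1 - lam ^ 2) / 4, (eta - 1) * (lam ^ 2 - 1) / 4,
       eta * (1 - lam) * Real.sqrt (1 - lam) * Real.sqrt (1 + lam) / 4;
     eta * Real.sqrt (1 - lam) * (1 + lam) * Real.sqrt (1 + lam) / 4,
       (eta - 1) * (lam ^ 2 - 1) / 4, (1 - lam ^ 2) / 4, 0;
     (eta - 1) * (lam ^ 2 - 1) / 4,
       eta * (1 - lam) * Real.sqrt (1 - lam) * Real.sqrt (1 + lam) / 4, 0,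
       (1 - lam) ^ 2 / 4]

def quantumCoupling : Matrix (Fin 4) (Fin 4) ℝ :=
  !![1, 0, 0, -1; 0, -1, 1, 0; 0, 1, -1, 0; -1, 0, 0, 1]

/-- The pairings `p, q, r, z` of `x` with `e₊⊗e₊, e₊⊗e₋, e₋⊗e₋, e₋⊗e₊`, where
`e± = (√(1+λ), ±√(1-λ))`. -/
noncomputable def productCoords (lam : ℝ) (x : Fin 4 → ℝ) : Fin 4 → ℝ :=
  let u := Real.sqrt (1 - lam) * Real.sqrt (1 + lam)
  ![(1 + lam) * x 0 + u * x 1 + u * x 2 + (1 - lam) * x 3,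
    (1 + lam) * x 0 - u * x 1 + u * x 2 - (1 - lam) * x 3,
    (1 + lam) * x 0 - u * x 1 - u * x 2 + (1 - lam) * x 3,
    (1 + lam) * x 0 + u * x 1 - u * x 2 - (1 - lam) * x 3]

theorem sqrt_one_sub_mul_sqrt_one_add_sq {lam : ℝ} (h₀ : -1 ≤ lam) (h₁ : lam ≤ 1) :
    (Real.sqrt (1 - lam) * Real.sqrt (1 + lam)) ^ 2 = 1 - lam ^ 2 := by
  rw [mul_pow, Real.sq_sqrt (by linarith), Real.sq_sqrt (by linarith)]
  ring

theorem classicalCoupling_isHermitian (lam eta : ℝ) :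
    (classicalCoupling lam eta).IsHermitian := by
  ext i j
  fin_cases i <;> fin_cases j <;> simp [classicalCoupling]

theorem quantumCoupling_isHermitian : quantumCoupling.IsHermitian := by
  ext i j
  fin_cases i <;> fin_cases j <;> simp [quantumCoupling]

theorem trace_classicalCoupling (lam eta : ℝ) : (classicalCoupling lam eta).trace = 1 := by
  simp only [trace, Fin.sum_univ_four, diag_apply, classicalCoupling, of_apply, cons_val]
  ring

theorem trace_quantumCoupling : quantumCoupling.trace = 0 := by
  simp [trace, Fin.sum_univ_four, quantumCoupling]

theorem classicalCoupling_quadForm {lam : ℝ} (h₀ : -1 ≤ lam) (h₁ : lam ≤ 1) (eta : ℝ)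
    (x : Fin 4 → ℝ) :
    x ⬝ᵥ classicalCoupling lam eta *ᵥ x =
      let y := productCoords lam x
      (y 0 ^ 2 + eta * y 1 ^ 2 + (1 - eta) * y 2 ^ 2) / 8 := by
  have hu := sqrt_one_sub_mul_sqrt_one_add_sq h₀ h₁
  simp only [classicalCoupling, productCoords, dotProduct, mulVec, Fin.sum_univ_four, of_apply,
    cons_val]
  linear_combination (-(2 * x 1 ^ 2 + 2 * x 2 ^ 2 + 4 * (1 - eta) * x 1 * x 2) / 8) * hu

theorem quantumCoupling_quadForm {lam : ℝ} (h₀ : -1 ≤ lam) (h₁ : lam ≤ 1) (x : Fin 4 → ℝ) :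
    4 * (1 - lam ^ 2) ^ 2 * (x ⬝ᵥ quantumCoupling *ᵥ x) =
      let y := productCoords lam x
      (y 3 + y 1 - lam * (y 0 + y 2)) ^ 2 - (1 - lam ^ 2) * (y 3 - y 1) ^ 2 := by
  have hu := sqrt_one_sub_mul_sqrt_one_add_sq h₀ h₁
  simp only [quantumCoupling, productCoords, dotProduct, mulVec, Fin.sum_univ_four, of_apply,
    cons_val]
  linear_combination (4 * (1 - lam ^ 2) * (x 1 - x 2) ^ 2) * hu

theorem classicalCoupling_posSemidef {lam eta : ℝ} (h₀ : -1 ≤ lam) (h₁ : lam ≤ 1)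
    (heta₀ : 0 ≤ eta) (heta₁ : eta ≤ 1) : (classicalCoupling lam eta).PosSemidef := by
  refine .of_dotProduct_mulVec_nonneg (classicalCoupling_isHermitian lam eta) fun x => ?_
  rw [star_trivial, classicalCoupling_quadForm h₀ h₁]
  have : 0 ≤ 1 - eta := sub_nonneg.2 heta₁
  positivity

theorem productCoords_ne_zero {lam : ℝ} (h₀ : -1 < lam) (h₁ : lam < 1) {x : Fin 4 → ℝ}
    (hx : x ≠ 0) : productCoords lam x ≠ 0 := by
  have hu : Real.sqrt (1 - lam) * Real.sqrt (1 + lam) ≠ 0 :=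
    (mul_pos (Real.sqrt_pos.2 (by linarith)) (Real.sqrt_pos.2 (by linarith))).ne'
  have ha : 1 + lam ≠ 0 := by linarith
  have hd : 1 - lam ≠ 0 := by linarith
  intro hy
  have hy₀ := congrFun hy 0
  have hy₁ := congrFun hy 1
  have hy₂ := congrFun hy 2
  have hy₃ := congrFun hy 3
  simp only [productCoords, cons_val, Pi.zero_apply] at hy₀ hy₁ hy₂ hy₃
  have hx₀ : x 0 = 0 := mul_left_cancel₀ ha (by linear_combination (hy₀ + hy₁ + hy₂ + hy₃) / 4)
  have hx₁ : x 1 = 0 := mul_left_cancel₀ hu (by linear_combination (hy₀ - hy₁ - hy₂ + hy₃) / 4)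
  have hx₂ : x 2 = 0 := mul_left_cancel₀ hu (by linear_combination (hy₀ + hy₁ - hy₂ - hy₃) / 4)
  have hx₃ : x 3 = 0 := mul_left_cancel₀ hd (by linear_combination (hy₀ - hy₁ + hy₂ - hy₃) / 4)
  exact hx (funext fun i => by fin_cases i <;> assumption)

theorem classicalCoupling_quadForm_add_sq_pos {lam eta κ : ℝ} (h₀ : -1 < lam) (h₁ : lam < 1)
    (heta₀ : 0 < eta) (heta₁ : eta < 1) (hκ : 0 < κ) {x : Fin 4 → ℝ} (hx : x ≠ 0) :
    0 < x ⬝ᵥ classicalCoupling lam eta *ᵥ x + κ * productCoords lam x 3 ^ 2 := by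
  rw [classicalCoupling_quadForm h₀.le h₁.le]
  obtain ⟨i, hi⟩ := Function.ne_iff.1 (productCoords_ne_zero h₀ h₁ hx)
  have hi := sq_pos_of_ne_zero hi
  have := sub_pos.2 heta₁
  fin_cases i <;> dsimp only at hi ⊢ <;> positivity

theorem classicalCoupling_quadForm_ge {lam : ℝ} (h₀ : -1 ≤ lam) (h₁ : lam ≤ 1) (eta : ℝ)
    (x : Fin 4 → ℝ) :
    let y := productCoords lam x
    min eta (1 - eta) * (y 0 ^ 2 + y 1 ^ 2 + y 2 ^ 2)
      ≤ 8 * (x ⬝ᵥ classicalCoupling lam eta *ᵥ x) := by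
  rw [classicalCoupling_quadForm h₀ h₁]
  intro y
  have hμ : min eta (1 - eta) ≤ 1 := by grind
  nlinarith [mul_le_mul_of_nonneg_right hμ (sq_nonneg (y 0)),
    mul_le_mul_of_nonneg_right (min_le_left eta (1 - eta)) (sq_nonneg (y 1)),
    mul_le_mul_of_nonneg_right (min_le_right eta (1 - eta)) (sq_nonneg (y 2))]

theorem quantumCoupling_quadForm_ge {lam : ℝ} (h₀ : -1 ≤ lam) (h₁ : lam ≤ 1) (x : Fin 4 → ℝ) :
    let y := productCoords lam x
    lam ^ 4 * y 3 ^ 2 / 2 - 25 * (y 0 ^ 2 + y 1 ^ 2 + y 2 ^ 2)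
      ≤ lam ^ 2 * (4 * (1 - lam ^ 2) ^ 2 * (x ⬝ᵥ quantumCoupling *ᵥ x)) := by
  rw [quantumCoupling_quadForm h₀ h₁]
  exact sq_sub_mul_sq_ge (by nlinarith)

theorem Qeps_posDef (lam eta : ℝ) (hlam : 0 < lam) (hlam1 : lam < 1)
    (heta : 0 < eta) (heta1 : eta < 1) :
    let Qc : Matrix (Fin 4) (Fin 4) ℝ :=
      !![(1 + lam) ^ 2 / 4, 0,
           eta * Real.sqrt (1 - lam) * (1 + lam) * Real.sqrt (1 + lam) / 4,
           (eta - 1) * (lam ^ 2 - 1) / 4;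
         0, (1 - lam ^ 2) / 4, (eta - 1) * (lam ^ 2 - 1) / 4,
           eta * (1 - lam) * Real.sqrt (1 - lam) * Real.sqrt (1 + lam) / 4;
         eta * Real.sqrt (1 - lam) * (1 + lam) * Real.sqrt (1 + lam) / 4,
           (eta - 1) * (lam ^ 2 - 1) / 4, (1 - lam ^ 2) / 4, 0;
         (eta - 1) * (lam ^ 2 - 1) / 4,
           eta * (1 - lam) * Real.sqrt (1 - lam) * Real.sqrt (1 + lam) / 4, 0,
           (1 - lam) ^ 2 / 4]
    let Qq : Matrix (Fin 4) (Fin 4) ℝ :=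
      !![1, 0, 0, -1; 0, -1, 1, 0; 0, 1, -1, 0; -1, 0, 0, 1]
    ∃ ε₀ > (0 : ℝ), ∀ ε : ℝ, 0 < ε → ε < ε₀ →
      (Qc + ε • Qq).PosDef ∧ (Qc + ε • Qq).trace = 1 := by
  intro Qc Qq
  have h₀ : -1 < lam := by linarith
  set μ := min eta (1 - eta)
  have hμ : 0 < μ := lt_min heta (sub_pos.2 heta1)
  have hm : 0 < 1 - lam ^ 2 := by nlinarith
  refine ⟨lam ^ 2 * (1 - lam ^ 2) ^ 2 * μ / 50, by positivity, fun ε hε hεδ => ⟨?_, ?_⟩⟩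
  · refine (classicalCoupling_posSemidef h₀.le hlam1.le heta.le heta1.le).posDef_add_smul
      quantumCoupling_isHermitian (S := fun x => lam ^ 4 * μ / 400 * productCoords lam x 3 ^ 2)
      (fun x => by positivity)
      (fun x hx => classicalCoupling_quadForm_add_sq_pos h₀ hlam1 heta heta1 (by positivity) hx)
      (fun x => ?_) hε hεδ
    have hQc := classicalCoupling_quadForm_ge h₀.le hlam1.le eta x
    have hQq := quantumCoupling_quadForm_ge h₀.le hlam1.le x
    dsimp only at hQc hQq ⊢
    linear_combination (μ / 200) * hQq + hQc / 8
  · show (classicalCoupling lam eta + ε • quantumCoupling).trace = 1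
    rw [trace_add, trace_smul, trace_classicalCoupling, trace_quantumCoupling, smul_zero,
      add_zero]
end

section
/- Let a > 0, 0 < λ < 1, 0 < η < 1, and let C be the 4×4 cost matrix [[A,0,0,γ],[0,B,δ,0],[0,δ,C',0],[γ,0,0,D]] with A = 2a²(1−λ)/(1+λ), B = C' = a²((1−λ)/(1+λ) + (1+λ)/(1−λ)), D = 2a²(1+λ)/(1−λ), γ = −2a²(1−λ²)/ (1−λ²) = −2a², δ = −2a²(1+λ²)/(1−λ²) (the cost matrix with b = a, μ = λ). Then trace(C · Q_c) = 2ηa², where Q_c is the quantized classical coupling matrix with parameters λ, η. -/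
theorem Matrix.trace_diagAntidiag_mul {R : Type*} [NonUnitalNonAssocSemiring R]
    (c₀₀ c₀₃ c₁₁ c₁₂ c₂₁ c₂₂ c₃₀ c₃₃ : R) (Q : Matrix (Fin 4) (Fin 4) R) :
    (!![c₀₀, 0, 0, c₀₃; 0, c₁₁, c₁₂, 0; 0, c₂₁, c₂₂, 0; c₃₀, 0, 0, c₃₃] * Q).trace =
      c₀₀ * Q 0 0 + c₀₃ * Q 3 0 + c₁₁ * Q 1 1 + c₁₂ * Q 2 1 +
        c₂₁ * Q 1 2 + c₂₂ * Q 2 2 + c₃₀ * Q 0 3 + c₃₃ * Q 3 3 := by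
  simp only [Matrix.trace, Matrix.diag, Matrix.mul_apply, Fin.sum_univ_four, Matrix.of_apply,
    Matrix.cons_val', Matrix.cons_val_zero, Matrix.cons_val_one, Matrix.cons_val_two,
    Matrix.cons_val_three, Matrix.head_cons, Matrix.tail_cons, Matrix.empty_val',
    Matrix.cons_val_fin_one, Matrix.head_fin_const, zero_mul, add_zero, zero_add]
  abel

theorem trace_C_Qc_general (a lam eta : ℝ) (hlam : 0 < lam) (hlam1 : lam < 1) :
    let C : Matrix (Fin 4) (Fin 4) ℝ :=
      !![2 * a ^ 2 * (1 - lam) / (1 + lam), 0, 0, -2 * a ^ 2;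
         0, a ^ 2 * ((1 - lam) / (1 + lam) + (1 + lam) / (1 - lam)),
           -2 * a ^ 2 * (1 + lam ^ 2) / (1 - lam ^ 2), 0;
         0, -2 * a ^ 2 * (1 + lam ^ 2) / (1 - lam ^ 2),
           a ^ 2 * ((1 - lam) / (1 + lam) + (1 + lam) / (1 - lam)), 0;
         -2 * a ^ 2, 0, 0, 2 * a ^ 2 * (1 + lam) / (1 - lam)]
    let Qc : Matrix (Fin 4) (Fin 4) ℝ :=
      !![(1 + lam) ^ 2 / 4, 0,
           eta * Real.sqrt (1 - lam) * (1 + lam) * Real.sqrt (1 + lam) / 4,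
           (eta - 1) * (lam ^ 2 - 1) / 4;
         0, (1 - lam ^ 2) / 4, (eta - 1) * (lam ^ 2 - 1) / 4,
           eta * (1 - lam) * Real.sqrt (1 - lam) * Real.sqrt (1 + lam) / 4;
         eta * Real.sqrt (1 - lam) * (1 + lam) * Real.sqrt (1 + lam) / 4,
           (eta - 1) * (lam ^ 2 - 1) / 4, (1 - lam ^ 2) / 4, 0;
         (eta - 1) * (lam ^ 2 - 1) / 4,
           eta * (1 - lam) * Real.sqrt (1 - lam) * Real.sqrt (1 + lam) / 4, 0,
           (1 - lam) ^ 2 / 4]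
    (C * Qc).trace = 2 * eta * a ^ 2 := by
  intro C Qc
  have h_plus : (1 : ℝ) + lam ≠ 0 := by linarith
  have h_minus : (1 : ℝ) - lam ≠ 0 := by linarith
  have h_sq : (1 : ℝ) - lam ^ 2 ≠ 0 := by nlinarith
  -- `C` vanishes wherever `Qcᵀ` has a square-root entry, so only rational entries enter.
  rw [Matrix.trace_diagAntidiag_mul]
  simp only [Qc, Matrix.of_apply, Matrix.cons_val', Matrix.cons_val_zero, Matrix.cons_val_one,
    Matrix.cons_val_two, Matrix.cons_val_three, Matrix.head_cons, Matrix.tail_cons,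
    Matrix.empty_val', Matrix.cons_val_fin_one, Matrix.head_fin_const]
  field_simp
  ring

theorem trace_C_Qc (a lam eta : ℝ) (ha : 0 < a) (hlam : 0 < lam) (hlam1 : lam < 1)
    (heta : 0 < eta) (heta1 : eta < 1) :
    let C : Matrix (Fin 4) (Fin 4) ℝ :=
      !![2 * a ^ 2 * (1 - lam) / (1 + lam), 0, 0, -2 * a ^ 2;
         0, a ^ 2 * ((1 - lam) / (1 + lam) + (1 + lam) / (1 - lam)),
           -2 * a ^ 2 * (1 + lam ^ 2) / (1 - lam ^ 2), 0;
         0, -2 * a ^ 2 * (1 + lam ^ 2) / (1 - lam ^ 2),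
           a ^ 2 * ((1 - lam) / (1 + lam) + (1 + lam) / (1 - lam)), 0;
         -2 * a ^ 2, 0, 0, 2 * a ^ 2 * (1 + lam) / (1 - lam)]
    let Qc : Matrix (Fin 4) (Fin 4) ℝ :=
      !![(1 + lam) ^ 2 / 4, 0,
           eta * Real.sqrt (1 - lam) * (1 + lam) * Real.sqrt (1 + lam) / 4,
           (eta - 1) * (lam ^ 2 - 1) / 4;
         0, (1 - lam ^ 2) / 4, (eta - 1) * (lam ^ 2 - 1) / 4,
           eta * (1 - lam) * Real.sqrt (1 - lam) * Real.sqrt (1 + lam) / 4;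
         eta * Real.sqrt (1 - lam) * (1 + lam) * Real.sqrt (1 + lam) / 4,
           (eta - 1) * (lam ^ 2 - 1) / 4, (1 - lam ^ 2) / 4, 0;
         (eta - 1) * (lam ^ 2 - 1) / 4,
           eta * (1 - lam) * Real.sqrt (1 - lam) * Real.sqrt (1 + lam) / 4, 0,
           (1 - lam) ^ 2 / 4]
    (C * Qc).trace = 2 * eta * a ^ 2 :=
  trace_C_Qc_general a lam eta hlam hlam1
end

section
/- Let a > 0, 0 < λ < 1, and let C be the 4×4 cost matrix with b = a, μ = λ as above, and Q_q = [[1,0,0,−1],[0,−1,1,0],[0,1,−1,0],[−1,0,0,1]]. Then trace(C · Q_q) = −8a²λ²/(1−λ²). In particular, for every sufficiently small ε > 0, trace(C·(Q_c + εQ_q)) = 2ηa² − ε·8a²λ²/(1−λ²) < 2ηa². -/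
set_option maxHeartbeats 1000000


theorem trace_C_Qq (a lam eta : ℝ) (ha : 0 < a) (hlam : 0 < lam) (hlam1 : lam < 1)
    (heta : 0 < eta) (heta1 : eta < 1) :
    let C : Matrix (Fin 4) (Fin 4) ℝ :=
      !![2 * a ^ 2 * (1 - lam) / (1 + lam), 0, 0, -2 * a ^ 2;
         0, a ^ 2 * ((1 - lam) / (1 + lam) + (1 + lam) / (1 - lam)),
           -2 * a ^ 2 * (1 + lam ^ 2) / (1 - lam ^ 2), 0;
         0, -2 * a ^ 2 * (1 + lam ^ 2) / (1 - lam ^ 2),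
           a ^ 2 * ((1 - lam) / (1 + lam) + (1 + lam) / (1 - lam)), 0;
         -2 * a ^ 2, 0, 0, 2 * a ^ 2 * (1 + lam) / (1 - lam)]
    let Qc : Matrix (Fin 4) (Fin 4) ℝ :=
      !![(1 + lam) ^ 2 / 4, 0,
           eta * Real.sqrt (1 - lam) * (1 + lam) * Real.sqrt (1 + lam) / 4,
           (eta - 1) * (lam ^ 2 - 1) / 4;
         0, (1 - lam ^ 2) / 4, (eta - 1) * (lam ^ 2 - 1) / 4,
           eta * (1 - lam) * Real.sqrt (1 - lam) * Real.sqrt (1 + lam) / 4;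
         eta * Real.sqrt (1 - lam) * (1 + lam) * Real.sqrt (1 + lam) / 4,
           (eta - 1) * (lam ^ 2 - 1) / 4, (1 - lam ^ 2) / 4, 0;
         (eta - 1) * (lam ^ 2 - 1) / 4,
           eta * (1 - lam) * Real.sqrt (1 - lam) * Real.sqrt (1 + lam) / 4, 0,
           (1 - lam) ^ 2 / 4]
    let Qq : Matrix (Fin 4) (Fin 4) ℝ :=
      !![1, 0, 0, -1; 0, -1, 1, 0; 0, 1, -1, 0; -1, 0, 0, 1]
    (C * Qq).trace = -8 * a ^ 2 * lam ^ 2 / (1 - lam ^ 2) ∧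
      ∀ ε : ℝ, 0 < ε →
        (C * (Qc + ε • Qq)).trace = 2 * eta * a ^ 2 - ε * (8 * a ^ 2 * lam ^ 2 / (1 - lam ^ 2)) ∧
        (C * (Qc + ε • Qq)).trace < 2 * eta * a ^ 2 := by
  intro C Qc Qq
  have h1 : (1:ℝ) + lam ≠ 0 := by nlinarith
  have h2 : (1:ℝ) - lam ≠ 0 := by nlinarith
  have h3 : (1:ℝ) - lam ^ 2 ≠ 0 := by nlinarith
  have hQq : (C * Qq).trace = -8 * a ^ 2 * lam ^ 2 / (1 - lam ^ 2) := by
    simp only [C, Qq, Matrix.trace, Matrix.diag, Matrix.mul_apply, Fin.sum_univ_four]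
    simp [Matrix.cons_val_zero, Matrix.cons_val_one]
    field_simp
    ring
  have hQc : (C * Qc).trace = 2 * eta * a ^ 2 := by
    simp only [C, Qc, Matrix.trace, Matrix.diag, Matrix.mul_apply, Fin.sum_univ_four]
    simp [Matrix.cons_val_zero, Matrix.cons_val_one]
    field_simp
    ring
  refine ⟨hQq, fun ε hε => ?_⟩
  have key : (C * (Qc + ε • Qq)).trace
      = 2 * eta * a ^ 2 - ε * (8 * a ^ 2 * lam ^ 2 / (1 - lam ^ 2)) := by
    rw [Matrix.mul_add, Matrix.trace_add, Matrix.mul_smul, Matrix.trace_smul, hQc, hQq]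
    simp [smul_eq_mul]
    ring
  refine ⟨key, ?_⟩
  rw [key]
  have h4 : (0:ℝ) < 1 - lam ^ 2 := by nlinarith
  have hpos : 0 < 8 * a ^ 2 * lam ^ 2 / (1 - lam ^ 2) := div_pos (by positivity) h4
  nlinarith [mul_pos hε hpos]
end
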